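/- arXiv:math/0406025 — 4 statements merged into one kernel-verified Lean document; each statement's English description precedes it below -/
import Mathlib

section
/- Let E be a commutative integral domain with 1 and ν : E → ℕ a function satisfying the Euclidean algorithm property: for all s, d ∈ E with d ≠ 0 there exist q, r ∈ E with s = d·q + r and (r = 0 or ν(r) < ν(d)). Then the following are equivalent: (1) for every e ∈ E and every d ≠ 0, the only pair (q, r) with d·e = d·q + r and (r = 0 or ν(r) < ν(d)) is q = e, r = 0; (2) for every d ≠ 0, the only pair (q, r) with 0 = d·q + r and (r = 0 or ν(r) < ν(d)) is q = 0, r = 0; (3) ν(a) ≤ ν(a·b) for all nonzero a, b ∈ E. -/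
/-- Lemma "L0": in an integral domain with a function `ν` satisfying the
Euclidean algorithm property, uniqueness of quotient/remainder for pairs
`(d*e, d)`, uniqueness for `(0, d)`, and `ν a ≤ ν (a*b)` are equivalent. -/
theorem unique_quotient_tfae {E : Type*} [CommRing E] [IsDomain E] (ν : E → ℕ)
    (hEA : ∀ s d : E, d ≠ 0 → ∃ q r : E, s = d * q + r ∧ (r = 0 ∨ ν r < ν d)) :
    List.TFAE
      [∀ e d : E, d ≠ 0 → ∀ q r : E, d * e = d * q + r →
          (r = 0 ∨ ν r < ν d) → q = e ∧ r = 0,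
       ∀ d : E, d ≠ 0 → ∀ q r : E, (0 : E) = d * q + r →
          (r = 0 ∨ ν r < ν d) → q = 0 ∧ r = 0,
       ∀ a b : E, a ≠ 0 → b ≠ 0 → ν a ≤ ν (a * b)] := by
  tfae_have 1 → 2 := by
    intro h1 d hd q r heq hr
    have := h1 0 d hd q r (by rw [mul_zero]; exact heq) hr
    exact this
  tfae_have 2 → 3 := by
    intro h2 a b ha hb
    by_contra hlt
    push_neg at hlt
    have := h2 a ha (-b) (a * b) (by ring) (Or.inr hlt)
    exact hb (neg_eq_zero.mp this.1)
  tfae_have 3 → 1 := by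
    intro h3 e d hd q r heq hr
    have hrq : r = d * (e - q) := by linear_combination -heq
    have hr0 : r = 0 := by
      by_contra hr0
      have hlt : ν r < ν d := hr.resolve_left hr0
      have heq0 : e - q ≠ 0 := by
        intro h0
        rw [h0, mul_zero] at hrq
        exact hr0 hrq
      have := h3 d (e - q) hd heq0
      rw [← hrq] at this
      omega
    refine ⟨?_, hr0⟩
    rw [hr0] at hrq
    rcases mul_eq_zero.mp hrq.symm with h | h
    · exact absurd h hd
    · exact (sub_eq_zero.mp h).symm
  tfae_finish
end

section
/- Let E be a commutative integral domain with 1 and ν : E → ℕ a function satisfying the Euclidean algorithm property (for all s, d ∈ E with d ≠ 0 there exist q, r ∈ E with s = d·q + r and (r = 0 or ν(r) < ν(d))) and satisfying ν(a) ≤ ν(a·b) for all nonzero a, b ∈ E. Let B ∈ E be a nonzero nonunit and let d ∈ E be coprime to B (i.e. there exist x, y ∈ E with x·B + y·d = 1). Then for every k ∈ E the following are equivalent: (i) for all β, s₀ ∈ E with (s₀ = 0 or ν(s₀) < ν(B)), d divides B·β + s₀ if and only if d divides β + k·s₀; (ii) d divides B·k − 1. In particular, the element k with property (i) exists and is unique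 modulo d, namely k ≡ B^{-1} (mod d). -/
/-!
Since `B` is coprime to `d`, it is invertible modulo `d`; call `x` an inverse. The identity
`B * β + s₀ = B * (β + k * s₀) - (B * k - 1) * s₀` shows that the test holds for every `s₀` as soon
as `k ≡ x`. Conversely `1` is a digit (a remainder of `1` modulo the nonunit `B` is nonzero, so
its size is at least `ν 1`), and testing `β = -x`, `s₀ = 1` gives `k ≡ x`.
-/

theorem nu_one_lt_of_not_isUnit {R : Type*} [CommRing R] (ν : R → ℕ)
    (hEA : ∀ s d : R, d ≠ 0 → ∃ q r : R, s = d * q + r ∧ (r = 0 ∨ ν r < ν d))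
    (hmul : ∀ a b : R, a ≠ 0 → b ≠ 0 → ν a ≤ ν (a * b))
    {B : R} (hB0 : B ≠ 0) (hBu : ¬IsUnit B) : ν 1 < ν B := by
  have : Nontrivial R := nontrivial_of_ne B 1 fun h => hBu (h ▸ isUnit_one)
  obtain ⟨q, r, hqr, hr⟩ := hEA 1 B hB0
  have hr0 : r ≠ 0 := by
    rintro rfl
    exact hBu (IsUnit.of_mul_eq_one q (by rw [hqr, add_zero]))
  calc ν 1 ≤ ν (1 * r) := hmul 1 r one_ne_zero hr0
    _ = ν r := by rw [one_mul]
    _ < ν B := hr.resolve_left hr0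

section Congruence

variable {R : Type*} [CommRing R] {B d : R}

theorem IsCoprime.exists_dvd_mul_sub_one (h : IsCoprime B d) : ∃ k, d ∣ B * k - 1 := by
  obtain ⟨x, y, hxy⟩ := h
  exact ⟨x, -y, by linear_combination hxy⟩

theorem IsCoprime.dvd_sub_of_dvd_mul_sub_one (h : IsCoprime B d) {k k' : R}
    (hk : d ∣ B * k - 1) (hk' : d ∣ B * k' - 1) : d ∣ k - k' :=
  h.symm.dvd_of_dvd_mul_left <| by
    simpa only [mul_sub, sub_sub_sub_cancel_right] using dvd_sub hk hk'

theorem IsCoprime.dvd_mul_add_iff (h : IsCoprime B d) {k : R} (hk : d ∣ B * k - 1) (β s₀ : R) :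
    d ∣ B * β + s₀ ↔ d ∣ β + k * s₀ := by
  have hrw : B * β + s₀ = B * (β + k * s₀) - (B * k - 1) * s₀ := by ring
  rw [hrw, dvd_sub_left (hk.mul_right s₀)]
  exact ⟨h.symm.dvd_of_dvd_mul_left, (·.mul_left B)⟩

theorem IsCoprime.dvd_mul_sub_one_of_forall (h : IsCoprime B d) {k : R}
    (htest : ∀ β, d ∣ B * β + 1 ↔ d ∣ β + k) : d ∣ B * k - 1 := by
  obtain ⟨x, hx⟩ := h.exists_dvd_mul_sub_one
  have hkx : d ∣ -x + k := (htest (-x)).mp <| by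
    simpa only [mul_neg, neg_sub, neg_add_eq_sub] using hx.neg_right
  have hrw : B * k - 1 = B * (-x + k) + (B * x - 1) := by ring
  rw [hrw]
  exact dvd_add (hkx.mul_left B) hx

end Congruence

theorem reverse_test_k_characterization_general {E : Type*} [CommRing E] (ν : E → ℕ)
    (hEA : ∀ s d : E, d ≠ 0 → ∃ q r : E, s = d * q + r ∧ (r = 0 ∨ ν r < ν d))
    (hmul : ∀ a b : E, a ≠ 0 → b ≠ 0 → ν a ≤ ν (a * b))
    (B d : E) (hB0 : B ≠ 0) (hBu : ¬IsUnit B)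
    (hcop : ∃ x y : E, x * B + y * d = 1) :
    (∀ k : E,
        (∀ β s₀ : E, (s₀ = 0 ∨ ν s₀ < ν B) →
          (d ∣ B * β + s₀ ↔ d ∣ β + k * s₀)) ↔ d ∣ B * k - 1) ∧
    (∃ k : E, d ∣ B * k - 1) ∧
    (∀ k k' : E, d ∣ B * k - 1 → d ∣ B * k' - 1 → d ∣ k - k') := by
  have hcop : IsCoprime B d := hcop
  have hone : ν 1 < ν B := nu_one_lt_of_not_isUnit ν hEA hmul hB0 hBu
  refine ⟨fun k => ⟨fun htest => ?_, fun hk β s₀ _ => hcop.dvd_mul_add_iff hk β s₀⟩,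
    hcop.exists_dvd_mul_sub_one, fun k k' => hcop.dvd_sub_of_dvd_mul_sub_one⟩
  exact hcop.dvd_mul_sub_one_of_forall fun β => by
    simpa only [mul_one] using htest β 1 (Or.inr hone)

/-- Theorem on the reverse-test multiplier `k`: for `B` a nonzero nonunit and `d`
coprime to `B`, an element `k` satisfies the reverse divisibility test for all
digits iff `d ∣ B*k - 1`; moreover such a `k` exists and is unique modulo `d`. -/
theorem reverse_test_k_characterization {E : Type*} [CommRing E] [IsDomain E] (ν : E → ℕ)
    (hEA : ∀ s d : E, d ≠ 0 → ∃ q r : E, s = d * q + r ∧ (r = 0 ∨ ν r < ν d))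
    (hmul : ∀ a b : E, a ≠ 0 → b ≠ 0 → ν a ≤ ν (a * b))
    (B d : E) (hB0 : B ≠ 0) (hBu : ¬IsUnit B)
    (hcop : ∃ x y : E, x * B + y * d = 1) :
    (∀ k : E,
        (∀ β s₀ : E, (s₀ = 0 ∨ ν s₀ < ν B) →
          (d ∣ B * β + s₀ ↔ d ∣ β + k * s₀)) ↔ d ∣ B * k - 1) ∧
    (∃ k : E, d ∣ B * k - 1) ∧
    (∀ k k' : E, d ∣ B * k - 1 → d ∣ B * k' - 1 → d ∣ k - k') :=
  reverse_test_k_characterization_general ν hEA hmul B d hB0 hBu hcop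
end

section
/- Let B, d, l, a be natural numbers with d > 1, l ≥ 1, d dividing B^l + 1, and gcd(a, d) = 1. Then for every natural number i, the remainders of a·B^i and a·B^{l+i} upon division by d sum to exactly d: (a·B^i mod d) + (a·B^{l+i} mod d) = d. Consequently, in the recurring base-B expansion of a/d, the chains of digits starting at the i-th and the (l+i)-th positions add up to a recurring chain representing 1. -/
/-- If `d ∣ B^l + 1` and `gcd a d = 1`, the remainders of `a*B^i` and
`a*B^(l+i)` modulo `d` always sum to `d`. -/
theorem remainders_sum_to_d (B d l a : ℕ) (hd : 1 < d) (hl : 1 ≤ l)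
    (hdvd : d ∣ B ^ l + 1) (ha : Nat.gcd a d = 1) (i : ℕ) :
    a * B ^ i % d + a * B ^ (l + i) % d = d := by
  have hd0 : 0 < d := by omega
  have hcopBl : Nat.Coprime (B ^ l) d := by
    have h2 : Nat.gcd (B ^ l) d ∣ B ^ l + 1 :=
      (Nat.gcd_dvd_right _ _).trans hdvd
    have h3 : Nat.gcd (B ^ l) d ∣ B ^ l := Nat.gcd_dvd_left _ _
    have h1 : Nat.gcd (B ^ l) d ∣ 1 := by simpa using Nat.dvd_sub h2 h3
    exact Nat.eq_one_of_dvd_one h1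
  have hcopB : Nat.Coprime B d := by
    have : Nat.gcd B d ∣ Nat.gcd (B ^ l) d :=
      Nat.dvd_gcd (dvd_pow (Nat.gcd_dvd_left B d) (by omega))
        (Nat.gcd_dvd_right B d)
    rw [hcopBl] at this
    exact Nat.eq_one_of_dvd_one this
  have hcop : ∀ j : ℕ, Nat.Coprime (a * B ^ j) d := fun j =>
    Nat.Coprime.mul ha (hcopB.pow_left j)
  have hpos : ∀ j : ℕ, 0 < a * B ^ j % d := by
    intro j
    rcases Nat.eq_zero_or_pos (a * B ^ j % d) with h | h
    · have hdvd' : d ∣ a * B ^ j := Nat.dvd_of_mod_eq_zero h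
      have h1 : d ∣ 1 := hcop j ▸ Nat.dvd_gcd hdvd' dvd_rfl
      have := Nat.eq_one_of_dvd_one h1
      omega
    · exact h
  have hlt : ∀ j : ℕ, a * B ^ j % d < d := fun j => Nat.mod_lt _ hd0
  have hdiv : d ∣ a * B ^ i + a * B ^ (l + i) := by
    have heq : a * B ^ i + a * B ^ (l + i) = a * B ^ i * (B ^ l + 1) := by
      rw [pow_add]; ring
    rw [heq]
    exact Dvd.dvd.mul_left hdvd _
  have hmod : (a * B ^ i % d + a * B ^ (l + i) % d) % d = 0 := by
    rw [← Nat.add_mod]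
    obtain ⟨k, hk⟩ := hdiv
    simp [hk]
  obtain ⟨k, hk⟩ := Nat.dvd_of_mod_eq_zero hmod
  have h1 := hpos i; have h2 := hpos (l + i)
  have h3 := hlt i; have h4 := hlt (l + i)
  have hk2 : d * k < d * 2 := by omega
  have hk0 : k ≠ 0 := by rintro rfl; omega
  have : k < 2 := Nat.lt_of_mul_lt_mul_left hk2
  interval_cases k <;> omega
end

section
/- Let E be a commutative integral domain with 1 that is not a field, and let ν : E → ℕ satisfy the Euclidean algorithm property (for all s, d ∈ E with d ≠ 0 there exist q, r ∈ E with s = d·q + r and (r = 0 or ν(r) < ν(d))) and ν(a) ≤ ν(a·b) for all nonzero a, b ∈ E. Then the following are equivalent: (1) ν(B) = ν(B − 1) for every nonzero nonunit B ∈ E; (2) ν(B) = ν(B − c) for every nonzero nonunit B ∈ E and every c ∈ E that is zero or a unit; (3) for every n ≥ 1, every nonzero nonunit B ∈ E, every c ∈ E that is zero or a unit, and every pair (q, r) with B^n − c = B·q + r and (r = 0 or ν(r) < ν(B)), one has q = B^{n−1} and r = −c; (4) there exist no nonzero nonunit B ∈ E, no n ≥ 1, and no a_1, …, a_n ∈ E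 with (each a_i = 0 or ν(a_i) < ν(B)) such that ∑_{j=1}^{n} a_j·B^{n−j} = B^n − 1 (i.e. 1 admits no representation as a recurring decimal 0.‾(a_1…a_n) in any base B). -/
set_option linter.unusedSectionVars false

section
variable {E : Type*} [CommRing E] [IsDomain E]

lemma nu_mul_unit (ν : E → ℕ) (hmul : ∀ a b : E, a ≠ 0 → b ≠ 0 → ν a ≤ ν (a * b))
    (x : E) (u : Eˣ) (hx : x ≠ 0) : ν (x * ↑u) = ν x := by
  refine le_antisymm ?_ (hmul x ↑u hx u.ne_zero)
  have h := hmul (x * ↑u) ↑u⁻¹ (mul_ne_zero hx u.ne_zero) u⁻¹.ne_zero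
  simpa [mul_assoc] using h

lemma nu_neg (ν : E → ℕ) (hmul : ∀ a b : E, a ≠ 0 → b ≠ 0 → ν a ≤ ν (a * b))
    (x : E) (hx : x ≠ 0) : ν (-x) = ν x := by
  simpa using nu_mul_unit ν hmul x (-1) hx

lemma sum_step (a : ℕ → E) (B : E) (m : ℕ) :
    ∑ j ∈ Finset.Icc 1 (m + 1), a j * B ^ (m + 1 - j)
      = B * (∑ j ∈ Finset.Icc 1 m, a j * B ^ (m - j)) + a (m + 1) := by
  rw [Finset.sum_Icc_succ_top (by omega : 1 ≤ m + 1)]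
  simp only [Nat.sub_self, pow_zero, mul_one, Finset.mul_sum]
  congr 1
  apply Finset.sum_congr rfl
  intro j hj
  have hj' : j ≤ m := (Finset.mem_Icc.mp hj).2
  have : m + 1 - j = (m - j) + 1 := by omega
  rw [this, pow_succ]
  ring

end

/-- Theorem "Tnorec": in a Euclidean-like domain that is not a field, the four
conditions on the valuation `ν` regarding `ν(B) = ν(B-1)`, `ν(B) = ν(B-c)`,
uniqueness of quotient/remainder for `B^n - c` divided by `B`, and the
non-representability of `1` as a recurring decimal, are equivalent. -/
theorem no_recurring_one_tfae {E : Type*} [CommRing E] [IsDomain E]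
    (hnf : ¬IsField E) (ν : E → ℕ)
    (hEA : ∀ s d : E, d ≠ 0 → ∃ q r : E, s = d * q + r ∧ (r = 0 ∨ ν r < ν d))
    (hmul : ∀ a b : E, a ≠ 0 → b ≠ 0 → ν a ≤ ν (a * b)) :
    List.TFAE
      [∀ B : E, B ≠ 0 → ¬IsUnit B → ν B = ν (B - 1),
       ∀ B : E, B ≠ 0 → ¬IsUnit B → ∀ c : E, (c = 0 ∨ IsUnit c) → ν B = ν (B - c),
       ∀ n : ℕ, 1 ≤ n → ∀ B : E, B ≠ 0 → ¬IsUnit B →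
         ∀ c : E, (c = 0 ∨ IsUnit c) → ∀ q r : E,
           B ^ n - c = B * q + r → (r = 0 ∨ ν r < ν B) →
             q = B ^ (n - 1) ∧ r = -c,
       ¬∃ (B : E) (n : ℕ) (a : ℕ → E), B ≠ 0 ∧ ¬IsUnit B ∧ 1 ≤ n ∧
         (∀ j : ℕ, 1 ≤ j → j ≤ n → a j = 0 ∨ ν (a j) < ν B) ∧
         ∑ j ∈ Finset.Icc 1 n, a j * B ^ (n - j) = B ^ n - 1] := by
  tfae_have 1 → 2 := by
    intro h1 B hB hBu c hc
    rcases hc with rfl | hc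
    · rw [sub_zero]
    · obtain ⟨u, rfl⟩ := hc
      set B' : E := B * ↑u⁻¹ with hB'
      have hB'0 : B' ≠ 0 := mul_ne_zero hB u⁻¹.ne_zero
      have hB'u : ¬IsUnit B' := by
        intro h
        exact hBu (by simpa [hB', mul_assoc] using h.mul (Units.isUnit u))
      have hνB' : ν B' = ν B := nu_mul_unit ν hmul B u⁻¹ hB
      have hsub : B - ↑u = (B' - 1) * ↑u := by
        simp [hB', sub_mul, mul_assoc]
      have hB'1 : B' - 1 ≠ 0 := by
        intro h
        apply hBu
        have : B' = 1 := by linear_combination h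
        have : B = ↑u := by
          have := congrArg (· * (u : E)) this
          simpa [hB', mul_assoc] using this
        rw [this]; exact Units.isUnit u
      rw [hsub, nu_mul_unit ν hmul _ u hB'1, ← h1 B' hB'0 hB'u, hνB']
  tfae_have 2 → 3 := by
    intro h2 n hn B hB hBu c hc q r heq hr
    have hpow : B * B ^ (n - 1) = B ^ n := by
      conv_rhs => rw [show n = (n - 1) + 1 by omega]
      rw [pow_succ]; ring
    have key : B * (B ^ (n - 1) - q) = r + c := by
      rw [mul_sub, hpow]
      linear_combination heq
    by_cases ht : B ^ (n - 1) - q = 0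
    · rw [ht, mul_zero] at key
      constructor
      · linear_combination -ht
      · linear_combination -key
    · exfalso
      have hrc0 : r + c ≠ 0 := by
        rw [← key]; exact mul_ne_zero hB ht
      have hrcu : ¬IsUnit (r + c) := by
        intro h
        rw [← key] at h
        exact hBu (isUnit_of_mul_isUnit_left h)
      have hν : ν (r + c) = ν r ∨ r = 0 := by
        rcases eq_or_ne r 0 with h | h
        · exact Or.inr h
        · left
          have := h2 (r + c) hrc0 hrcu c hc
          simpa using this
      have hBle : ν B ≤ ν (r + c) := by
        rw [← key]; exact hmul B _ hB ht
      rcases hν with hν | rfl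
      · rcases hr with rfl | hr
        · simp only [zero_add] at hrc0 hrcu key
          rcases hc with rfl | hc
          · exact hrc0 rfl
          · exact hrcu hc
        · rw [hν] at hBle; omega
      · simp only [zero_add] at hrc0 hrcu key
        rcases hc with rfl | hc
        · exact hrc0 rfl
        · exact hrcu hc
  tfae_have 3 → 4 := by
    intro h3
    rintro ⟨B, n, a, hB, hBu, hn, hd, hs⟩
    have key : ∀ m : ℕ, (∀ j : ℕ, 1 ≤ j → j ≤ m → a j = 0 ∨ ν (a j) < ν B) →
        ∑ j ∈ Finset.Icc 1 m, a j * B ^ (m - j) ≠ B ^ m := by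
      intro m
      induction m with
      | zero => simp
      | succ m ih =>
        intro hdm hsm
        rw [sum_step] at hsm
        have := h3 (m + 1) (by omega) B hB hBu 0 (Or.inl rfl)
          (∑ j ∈ Finset.Icc 1 m, a j * B ^ (m - j)) (a (m + 1))
          (by rw [sub_zero]; exact hsm.symm) (hdm (m + 1) (by omega) le_rfl)
        exact ih (fun j h1 h2 => hdm j h1 (by omega)) (by simpa using this.1)
    obtain ⟨m, rfl⟩ : ∃ m, n = m + 1 := ⟨n - 1, by omega⟩
    rw [sum_step] at hs
    have := h3 (m + 1) (by omega) B hB hBu 1 (Or.inr isUnit_one)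
      (∑ j ∈ Finset.Icc 1 m, a j * B ^ (m - j)) (a (m + 1))
      hs.symm (hd (m + 1) (by omega) le_rfl)
    exact key m (fun j h1 h2 => hd j h1 (by omega)) (by simpa using this.1)
  tfae_have 4 → 1 := by
    intro h4 B hB hBu
    by_contra hne
    rcases Nat.lt_or_ge (ν (B - 1)) (ν B) with hlt | hge
    · apply h4
      refine ⟨B, 1, fun _ => B - 1, hB, hBu, le_rfl, fun j _ _ => Or.inr hlt, ?_⟩
      simp
    · have hlt : ν B < ν (B - 1) := by omega
      have hB1 : B - 1 ≠ 0 := by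
        intro h
        exact hBu (by rw [show B = 1 by linear_combination h]; exact isUnit_one)
      have hB1u : ¬IsUnit (B - 1) := by
        intro h
        obtain ⟨u, hu⟩ := h
        have h1 : (B - 1) * (↑u⁻¹ * B) = B := by
          rw [← hu, ← mul_assoc, Units.mul_inv, one_mul]
        have h2 : ν (B - 1) ≤ ν B := by
          have := hmul (B - 1) (↑u⁻¹ * B) hB1 (mul_ne_zero u⁻¹.ne_zero hB)
          rwa [h1] at this
        omega
      apply h4
      refine ⟨B - 1, 2, fun j => if j = 1 then B else -B, hB1, hB1u, by omega, ?_, ?_⟩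
      · intro j h1 h2
        right
        by_cases hj : j = 1 <;> simp [hj, nu_neg ν hmul B hB, hlt]
      · rw [show (2:ℕ) = 1 + 1 from rfl, sum_step]
        simp only [Finset.Icc_self, Finset.sum_singleton]
        norm_num
        ring
  tfae_finish
end
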